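/- arXiv:1611.08869 — 6 statements merged into one kernel-verified Lean document; each statement's English description precedes it below -/
import Mathlib

section
/- For complex numbers u with |u| ≤ 1/2 and p ∈ (2, 3], writing u = a + ib with a, b real, one has |(|1+u|^{p-1}(1+u)) - (1 + p a + i b + (p(p-1)/2) a² + ((p-1)/2) b² + (p-1) i a b)| ≤ C |u|^{min(3,(p+2)/2)} for a constant C depending only on p. -/
set_option maxHeartbeats 1000000

open Set

lemma mvt_helper {φ φ' : ℝ → ℝ} {K : ℝ} (hK : 0 ≤ K) (n : ℕ)
    (hder : ∀ x ∈ Set.Icc (-(3/4) : ℝ) (5/4), HasDerivAt φ (φ' x) x)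
    (h0 : φ 0 = 0)
    (hb : ∀ x ∈ Set.Icc (-(3/4) : ℝ) (5/4), |φ' x| ≤ K * |x| ^ n) :
    ∀ t ∈ Set.Icc (-(3/4) : ℝ) (5/4), |φ t| ≤ K * |t| ^ (n + 1) := by
  intro t ht
  have h0m : (0:ℝ) ∈ Set.Icc (-(3/4) : ℝ) (5/4) := by constructor <;> norm_num
  have hsub : Set.uIcc (0:ℝ) t ⊆ Set.Icc (-(3/4) : ℝ) (5/4) :=
    Set.ordConnected_Icc.uIcc_subset h0m ht
  have hxt : ∀ x ∈ Set.uIcc (0:ℝ) t, |x| ≤ |t| := by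
    intro x hx
    rcases Set.mem_uIcc.mp hx with ⟨h1, h2⟩ | ⟨h1, h2⟩
    · rw [abs_of_nonneg h1, abs_of_nonneg (h1.trans h2)]; exact h2
    · rw [abs_of_nonpos h2, abs_of_nonpos (h1.trans h2)]; linarith
  have key := Convex.norm_image_sub_le_of_norm_hasDerivWithin_le
    (f := φ) (f' := φ') (s := Set.uIcc 0 t) (C := K * |t| ^ n)
    (fun x hx => (hder x (hsub hx)).hasDerivWithinAt)
    (fun x hx => by
      calc ‖φ' x‖ = |φ' x| := Real.norm_eq_abs _
        _ ≤ K * |x| ^ n := hb x (hsub hx)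
        _ ≤ K * |t| ^ n := by
            apply mul_le_mul_of_nonneg_left _ hK
            exact pow_le_pow_left₀ (abs_nonneg _) (hxt x hx) n)
    (convex_uIcc 0 t) Set.left_mem_uIcc Set.right_mem_uIcc
  rw [Real.norm_eq_abs, Real.norm_eq_abs, h0, sub_zero, sub_zero] at key
  calc |φ t| ≤ K * |t| ^ n * |t| := key
    _ = K * |t| ^ (n + 1) := by ring

lemma hasDerivAt_onePlus (q : ℝ) {x : ℝ} (hx : (0:ℝ) < 1 + x) :
    HasDerivAt (fun t : ℝ => (1 + t) ^ q) (q * (1 + x) ^ (q - 1)) x := by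
  have h := (Real.hasDerivAt_rpow_const (x := 1 + x) (p := q) (Or.inl hx.ne')).comp x
    ((hasDerivAt_id x).const_add 1)
  simp only [mul_one] at h; exact h

lemma taylor_rpow (q : ℝ) (hq0 : 0 ≤ q) (hq1 : q ≤ 1) :
    ∃ M : ℝ, 0 < M ∧ ∀ t ∈ Set.Icc (-(3/4) : ℝ) (5/4),
      |(1 + t) ^ q - (1 + q * t + q * (q - 1) / 2 * t ^ 2)| ≤ M * |t| ^ 3 := by
  set M : ℝ := 64 * |q * (q - 1) * (q - 2)| + 1 with hM_def
  have hM : 0 < M := by positivity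
  refine ⟨M, hM, ?_⟩
  have hmem : ∀ x ∈ Set.Icc (-(3/4) : ℝ) (5/4), (0:ℝ) < 1 + x ∧ (1/4 : ℝ) ≤ 1 + x := by
    intro x hx; obtain ⟨h1, h2⟩ := hx; constructor <;> linarith
  -- level 1
  have lvl1 : ∀ t ∈ Set.Icc (-(3/4) : ℝ) (5/4),
      |q * (q - 1) * (1 + t) ^ (q - 2) - q * (q - 1)| ≤ M * |t| ^ (0 + 1) := by
    apply mvt_helper hM.le 0
      (φ' := fun x => q * (q - 1) * (q - 2) * (1 + x) ^ (q - 3))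
    · intro x hx
      have hpos := (hmem x hx).1
      have h := ((hasDerivAt_onePlus (q - 2) hpos).const_mul (q * (q - 1))).sub_const
        (q * (q - 1))
      have he : q - 2 - 1 = q - 3 := by ring
      rw [he] at h
      exact h.congr_deriv (by ring)
    · simp
    · intro x hx
      obtain ⟨hpos, hq4⟩ := hmem x hx
      have h1 : (1 + x) ^ (q - 3) ≤ (1/4 : ℝ) ^ (q - 3) :=
        Real.rpow_le_rpow_of_nonpos (by norm_num) hq4 (by linarith)
      have h2 : (1/4 : ℝ) ^ (q - 3) ≤ 64 := by
        have : (1/4 : ℝ) ^ (q - 3) = (4:ℝ) ^ (3 - q) := by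
          rw [show (1/4 : ℝ) = 4⁻¹ by norm_num,
            Real.inv_rpow (by norm_num), ← Real.rpow_neg (by norm_num),
            show -(q - 3) = 3 - q by ring]
        rw [this]
        calc (4:ℝ) ^ (3 - q) ≤ (4:ℝ) ^ (3:ℝ) :=
              Real.rpow_le_rpow_of_exponent_le (by norm_num) (by linarith)
          _ = 64 := by
              rw [show (3:ℝ) = ((3:ℕ):ℝ) by norm_num, Real.rpow_natCast]; norm_num
      have hnn : (0:ℝ) ≤ (1 + x) ^ (q - 3) := Real.rpow_nonneg hpos.le _
      rw [abs_mul, abs_of_nonneg hnn]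
      calc |q * (q - 1) * (q - 2)| * (1 + x) ^ (q - 3)
          ≤ |q * (q - 1) * (q - 2)| * 64 := by
            exact mul_le_mul_of_nonneg_left (h1.trans h2) (abs_nonneg _)
        _ ≤ M * |x| ^ 0 := by rw [hM_def]; simp; linarith [abs_nonneg (q * (q-1) * (q-2))]
  have lvl2 : ∀ t ∈ Set.Icc (-(3/4) : ℝ) (5/4),
      |q * (1 + t) ^ (q - 1) - (q + q * (q - 1) * t)| ≤ M * |t| ^ (1 + 1) := by
    apply mvt_helper hM.le 1
      (φ' := fun x => q * (q - 1) * (1 + x) ^ (q - 2) - q * (q - 1))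
    · intro x hx
      have hpos := (hmem x hx).1
      have hlin : HasDerivAt (fun x : ℝ => q + q * (q - 1) * x) (q * (q - 1)) x := by
        simpa using ((hasDerivAt_id x).const_mul (q * (q - 1))).const_add q
      have h := ((hasDerivAt_onePlus (q - 1) hpos).const_mul q).sub hlin
      have he : q - 1 - 1 = q - 2 := by ring
      rw [he] at h
      exact h.congr_deriv (by ring)
    · simp
    · intro x hx
      simpa using lvl1 x hx
  have lvl3 : ∀ t ∈ Set.Icc (-(3/4) : ℝ) (5/4),
      |(1 + t) ^ q - (1 + q * t + q * (q - 1) / 2 * t ^ 2)| ≤ M * |t| ^ (2 + 1) := by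
    apply mvt_helper hM.le 2
      (φ' := fun x => q * (1 + x) ^ (q - 1) - (q + q * (q - 1) * x))
    · intro x hx
      have hpos := (hmem x hx).1
      have hpoly : HasDerivAt (fun x : ℝ => 1 + q * x + q * (q - 1) / 2 * x ^ 2)
          (q + q * (q - 1) * x) x := by
        have h1 : HasDerivAt (fun x : ℝ => 1 + q * x) q x := by
          simpa using ((hasDerivAt_id x).const_mul q).const_add 1
        have h2 : HasDerivAt (fun x : ℝ => q * (q - 1) / 2 * x ^ 2)
            (q * (q - 1) / 2 * (2 * x)) x := by
          simpa using ((hasDerivAt_pow 2 x).const_mul (q * (q - 1) / 2))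
        have := h1.add h2
        exact this.congr_deriv (by ring)
      exact (hasDerivAt_onePlus q hpos).sub hpoly
    · simp
    · intro x hx
      exact lvl2 x hx
  intro t ht
  simpa using lvl3 t ht

/-- Taylor expansion of `F(w) = |w|^{p-1} w` around `w = 1` to second order,
with remainder of order `|u|^{min(3,(p+2)/2)}`, for `2 < p ≤ 3`. -/
theorem stmt6 (p : ℝ) (hp : 2 < p) (hp3 : p ≤ 3) :
    ∃ C : ℝ, 0 < C ∧ ∀ u : ℂ, ‖u‖ ≤ 1 / 2 →
      ‖((↑(‖1 + u‖ ^ (p - 1)) : ℂ) * (1 + u)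
          - (1 + (p : ℂ) * (u.re : ℂ) + Complex.I * (u.im : ℂ)
              + ((p * (p - 1) / 2 : ℝ) : ℂ) * (u.re : ℂ) ^ 2
              + (((p - 1) / 2 : ℝ) : ℂ) * (u.im : ℂ) ^ 2
              + ((p - 1 : ℝ) : ℂ) * Complex.I * (u.re : ℂ) * (u.im : ℂ)))‖
        ≤ C * ‖u‖ ^ min (3:ℝ) ((p + 2) / 2) := by
  set q : ℝ := (p - 1) / 2 with hq_def
  clear_value q
  have hq0 : 0 ≤ q := by rw [hq_def]; linarith
  have hq1 : q ≤ 1 := by rw [hq_def]; linarith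
  obtain ⟨M, hM, hTay⟩ := taylor_rpow q hq0 hq1
  set c : ℝ := q * (q - 1) / 2 with hc_def
  clear_value c
  refine ⟨24 * M + q + 12 * |c| + 1, by positivity, ?_⟩
  intro u hu
  set a : ℝ := u.re with ha_def
  set b : ℝ := u.im with hb_def
  set r : ℝ := ‖u‖ with hr_def
  have hr0 : 0 ≤ r := by rw [hr_def]; exact norm_nonneg u
  have hr12 : r ≤ 1/2 := hu
  have ha : |a| ≤ r := by rw [ha_def, hr_def]; exact Complex.abs_re_le_norm u
  have hb2 : |b| ≤ r := by rw [hb_def, hr_def]; exact Complex.abs_im_le_norm u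
  have hab : a^2 + b^2 = r^2 := by
    rw [ha_def, hb_def, hr_def, Complex.sq_norm, Complex.normSq_apply]
    ring
  have hu' : (a : ℂ) + (b : ℂ) * Complex.I = u := by
    rw [ha_def, hb_def]; exact Complex.re_add_im u
  have habs1u_sq : ‖1 + u‖ ^ (2:ℕ) = 1 + (2*a + a^2 + b^2) := by
    rw [ha_def, hb_def, Complex.sq_norm, Complex.normSq_apply]
    simp only [Complex.add_re, Complex.add_im, Complex.one_re, Complex.one_im]
    ring
  have habs1u : ‖1 + u‖ ≤ 3/2 := by
    have h1 : ‖1 + u‖ ≤ ‖(1:ℂ)‖ + ‖u‖ := norm_add_le 1 u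
    rw [norm_one, ← hr_def] at h1
    linarith
  have habs1u0 : 0 ≤ ‖1 + u‖ := norm_nonneg _
  clear_value a b r
  have ha' := abs_le.mp ha
  set s : ℝ := 2*a + a^2 + b^2 with hs_def
  clear_value s
  have hs_ub : |s| ≤ 5/2 * r := by
    rw [abs_le, hs_def]
    constructor <;> nlinarith [ha'.1, ha'.2, hr0, sq_nonneg b]
  have hs_mem : s ∈ Set.Icc (-(3/4) : ℝ) (5/4) := by
    constructor
    · rw [hs_def]
      have h1 : (0:ℝ) ≤ a + 1/2 := by linarith [ha'.1]
      nlinarith [sq_nonneg b, mul_nonneg h1 (by linarith [ha'.1] : (0:ℝ) ≤ a + 3/2)]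
    · linarith [le_abs_self s, hs_ub]
  have hA : ‖1 + u‖ ^ (p - 1) = (1 + s) ^ q := by
    have h2q : p - 1 = 2 * q := by rw [hq_def]; ring
    rw [h2q, Real.rpow_mul habs1u0]
    congr 1
    rw [show (2:ℝ) = ((2:ℕ):ℝ) by norm_num, Real.rpow_natCast, habs1u_sq, hs_def]
  have hT := hTay s hs_mem
  rw [hA]
  set PP : ℂ := 1 + (p : ℂ) * (a : ℂ) + Complex.I * (b : ℂ)
      + ((p * (p - 1) / 2 : ℝ) : ℂ) * (a : ℂ) ^ 2
      + ((q : ℝ) : ℂ) * (b : ℂ) ^ 2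
      + ((p - 1 : ℝ) : ℂ) * Complex.I * (a : ℂ) * (b : ℂ) with hPP_def
  have hD : ((1 + q*s + c*s^2 : ℝ) : ℂ) * (1 + u) - PP
      = ((q * (a^2 + b^2) + c * s^2 : ℝ) : ℂ) * u
        + ((c * (4*a*(a^2 + b^2) + (a^2 + b^2)^2) : ℝ) : ℂ) := by
    rw [hPP_def, ← hu', hc_def, hq_def, hs_def]
    push_cast
    ring
  have hsplit : (((1 + s) ^ q : ℝ) : ℂ) * (1 + u) - PP
      = ((((1 + s) ^ q - (1 + q*s + c*s^2)) : ℝ) : ℂ) * (1 + u)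
        + (((1 + q*s + c*s^2 : ℝ) : ℂ) * (1 + u) - PP) := by
    push_cast
    ring
  rw [hsplit, hD]
  clear_value PP
  clear hD hsplit hPP_def PP
  have hc0 : (0:ℝ) ≤ |c| := abs_nonneg c
  have hr3 : (0:ℝ) ≤ r^3 := pow_nonneg hr0 3
  have hs2 : s^2 ≤ 25/4 * r^2 := by nlinarith [hs_ub, abs_nonneg s, sq_abs s, hr0]
  have hs3 : |s|^3 ≤ 125/8 * r^3 := by
    have h := pow_le_pow_left₀ (abs_nonneg s) hs_ub 3
    calc |s|^3 ≤ (5/2 * r)^3 := h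
      _ = 125/8 * r^3 := by ring
  have hX : |(1 + s) ^ q - (1 + q*s + c*s^2)| * ‖1 + u‖ ≤ 24 * M * r^3 := by
    calc |(1 + s) ^ q - (1 + q*s + c*s^2)| * ‖1 + u‖
        ≤ (M * |s|^3) * (3/2) := mul_le_mul hT habs1u habs1u0 (by positivity)
      _ ≤ 24 * M * r^3 := by nlinarith [mul_le_mul_of_nonneg_left hs3 hM.le, mul_nonneg hM.le hr3]
  have hY1 : |q * (a^2 + b^2) + c * s^2| * r ≤ (q + 7 * |c|) * r^3 := by
    have h1 : |q * (a^2 + b^2) + c * s^2| ≤ q * r^2 + |c| * (25/4 * r^2) := by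
      calc |q * (a^2 + b^2) + c * s^2| ≤ |q * (a^2 + b^2)| + |c * s^2| := abs_add_le _ _
        _ = q * r^2 + |c| * s^2 := by
            rw [abs_mul, abs_mul, abs_of_nonneg hq0, abs_of_nonneg (by positivity : (0:ℝ) ≤ a^2 + b^2), abs_of_nonneg (sq_nonneg s), hab]
        _ ≤ q * r^2 + |c| * (25/4 * r^2) := by nlinarith [mul_le_mul_of_nonneg_left hs2 hc0]
    calc |q * (a^2 + b^2) + c * s^2| * r ≤ (q * r^2 + |c| * (25/4 * r^2)) * r :=
          mul_le_mul_of_nonneg_right h1 hr0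
      _ ≤ (q + 7 * |c|) * r^3 := by nlinarith [mul_nonneg hc0 hr3]
  have hY2 : |c * (4*a*(a^2 + b^2) + (a^2 + b^2)^2)| ≤ 5 * |c| * r^3 := by
    rw [abs_mul]
    have h1 : |4*a*(a^2 + b^2) + (a^2 + b^2)^2| ≤ 5 * r^3 := by
      rw [hab]
      calc |4*a*r^2 + (r^2)^2| ≤ |4*a*r^2| + |(r^2)^2| := abs_add_le _ _
        _ = 4 * |a| * r^2 + r^4 := by
            rw [abs_mul, abs_mul, abs_of_nonneg (sq_nonneg r), abs_of_nonneg (by positivity : (0:ℝ) ≤ (r^2)^2)]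
            norm_num
            ring
        _ ≤ 5 * r^3 := by nlinarith [mul_le_mul_of_nonneg_right ha (sq_nonneg r), hr3, pow_nonneg hr0 4]
    calc |c| * |4*a*(a^2 + b^2) + (a^2 + b^2)^2| ≤ |c| * (5 * r^3) :=
          mul_le_mul_of_nonneg_left h1 hc0
      _ = 5 * |c| * r^3 := by ring
  have hmain : ‖(((((1 + s) ^ q - (1 + q*s + c*s^2)) : ℝ) : ℂ) * (1 + u)
        + (((q * (a^2 + b^2) + c * s^2 : ℝ) : ℂ) * u
          + ((c * (4*a*(a^2 + b^2) + (a^2 + b^2)^2) : ℝ) : ℂ)))‖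
      ≤ (24 * M + q + 12 * |c| + 1) * r^3 := by
    calc ‖_‖
        ≤ ‖((((1 + s) ^ q - (1 + q*s + c*s^2)) : ℝ) : ℂ) * (1 + u)‖
          + ‖(((q * (a^2 + b^2) + c * s^2 : ℝ) : ℂ) * u
            + ((c * (4*a*(a^2 + b^2) + (a^2 + b^2)^2) : ℝ) : ℂ))‖ := norm_add_le _ _
      _ ≤ |(1 + s) ^ q - (1 + q*s + c*s^2)| * ‖1 + u‖
          + (|q * (a^2 + b^2) + c * s^2| * r
            + |c * (4*a*(a^2 + b^2) + (a^2 + b^2)^2)|) := by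
          rw [norm_mul, Complex.norm_real, Real.norm_eq_abs]
          gcongr
          calc ‖_‖ ≤ ‖((q * (a^2 + b^2) + c * s^2 : ℝ) : ℂ) * u‖
              + ‖((c * (4*a*(a^2 + b^2) + (a^2 + b^2)^2) : ℝ) : ℂ)‖ :=
                norm_add_le _ _
            _ = |q * (a^2 + b^2) + c * s^2| * r
                + |c * (4*a*(a^2 + b^2) + (a^2 + b^2)^2)| := by
                rw [norm_mul, Complex.norm_real, Complex.norm_real, Real.norm_eq_abs, Real.norm_eq_abs, hr_def]
      _ ≤ 24 * M * r^3 + ((q + 7 * |c|) * r^3 + 5 * |c| * r^3) :=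
          add_le_add hX (add_le_add hY1 hY2)
      _ ≤ (24 * M + q + 12 * |c| + 1) * r^3 := by nlinarith [hr3, mul_nonneg hc0 hr3]
  refine le_trans hmain ?_
  apply mul_le_mul_of_nonneg_left _ (by positivity)
  rcases eq_or_lt_of_le hr0 with h | h
  · rw [← h, Real.zero_rpow]
    · norm_num
    · have : (0:ℝ) < min (3:ℝ) ((p + 2) / 2) := lt_min (by norm_num) (by linarith)
      exact this.ne'
  · have h3 : r ^ (3:ℕ) = r ^ ((3:ℕ):ℝ) := (Real.rpow_natCast r 3).symm
    rw [h3, show (((3:ℕ):ℝ)) = (3:ℝ) by norm_num]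
    exact Real.rpow_le_rpow_of_exponent_ge h (by linarith) (min_le_left _ _)
end

section
/- Let F(w) = |w|^{p-1} w for complex w and 1 < p ≤ 2. Then there is C = C(p) such that for all complex P and ε: if |ε| ≤ |P|/2 then |F(P+ε) - F(P) - ((p+1)/2)|P|^{p-1}ε - ((p-1)/2)|P|^{p-3}P² conj(ε)| ≤ C |ε|^p, and if |ε| > |P|/2 then |F(P+ε) - F(P)| ≤ C|ε|^p as well. -/
open Real Set

lemma aux_lip {r : ℝ} (hr1 : -2 ≤ r) (hr2 : r ≤ 0) {c : ℝ}
    (hc : c ∈ Icc (1/4:ℝ) (9/4)) : |c ^ r - 1 ^ r| ≤ 128 * |c - 1| := by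
  have key := Convex.norm_image_sub_le_of_norm_hasDerivWithin_le
    (f := fun u : ℝ => u ^ r) (f' := fun u : ℝ => r * u ^ (r - 1))
    (s := Icc (1/4:ℝ) (9/4)) (C := 128)
    (fun u hu => (Real.hasDerivAt_rpow_const (p := r)
      (Or.inl (by intro h; rw [h] at hu; norm_num at hu))).hasDerivWithinAt)
    (fun u hu => by
      have hu1 : (1/4:ℝ) ≤ u := hu.1
      have hupos : (0:ℝ) < u := lt_of_lt_of_le (by norm_num) hu1
      have h1 : u ^ (r - 1) ≤ (1/4:ℝ) ^ (r - 1) :=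
        Real.rpow_le_rpow_of_nonpos (by norm_num) hu1 (by linarith)
      have h2 : (1/4:ℝ) ^ (r - 1) = 4 ^ (1 - r) := by
        rw [show (1/4:ℝ) = 4⁻¹ by norm_num, ← Real.rpow_neg_one,
          ← Real.rpow_mul (by norm_num : (0:ℝ) ≤ 4)]
        ring_nf
      have h3 : (4:ℝ) ^ (1 - r) ≤ 4 ^ (3:ℝ) :=
        Real.rpow_le_rpow_of_exponent_le (by norm_num) (by linarith)
      have h4 : (4:ℝ) ^ (3:ℝ) = 64 := by
        rw [show (3:ℝ) = ((3:ℕ):ℝ) by norm_num, Real.rpow_natCast]; norm_num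
      have h5 : u ^ (r - 1) ≤ 64 := by rw [h4] at h3; linarith
      have h6 : (0:ℝ) ≤ u ^ (r - 1) := Real.rpow_nonneg hupos.le _
      have : ‖r * u ^ (r - 1)‖ = |r| * u ^ (r - 1) := by
        rw [norm_mul, Real.norm_eq_abs, Real.norm_eq_abs, abs_of_nonneg h6]
      rw [this]
      have : |r| ≤ 2 := abs_le.2 ⟨hr1, by linarith⟩
      nlinarith)
    (convex_Icc _ _) (by norm_num : (1:ℝ) ∈ Icc (1/4:ℝ) (9/4)) hc
  simpa [Real.norm_eq_abs, abs_sub_comm] using key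

lemma aux_taylor {q : ℝ} (hq0 : 0 < q) (hq1 : q ≤ 1/2) {t : ℝ}
    (ht : t ∈ Icc (1/4:ℝ) (9/4)) :
    |t ^ q - 1 - q * (t - 1)| ≤ 64 * (t - 1) ^ 2 := by
  have hsub : uIcc t 1 ⊆ Icc (1/4:ℝ) (9/4) := by
    intro c hc
    rw [Set.mem_uIcc] at hc
    rcases hc with ⟨h1, h2⟩ | ⟨h1, h2⟩
    · exact ⟨le_trans ht.1 h1, le_trans h2 (by norm_num)⟩
    · exact ⟨le_trans (by norm_num) h1, le_trans h2 ht.2⟩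
  have key := Convex.norm_image_sub_le_of_norm_hasDerivWithin_le
    (f := fun u : ℝ => u ^ q - q * u) (f' := fun u : ℝ => q * u ^ (q - 1) - q)
    (s := uIcc t 1) (C := 64 * |t - 1|)
    (fun u hu => by
      have hu' := hsub hu
      have hupos : (0:ℝ) < u := lt_of_lt_of_le (by norm_num) hu'.1
      exact ((Real.hasDerivAt_rpow_const (p := q) (Or.inl hupos.ne')).sub
        ((hasDerivAt_id u).const_mul q)).hasDerivWithinAt.congr_deriv (by ring))
    (fun c hc => by
      have hc' := hsub hc
      have h1 : |c ^ (q - 1) - 1 ^ (q - 1)| ≤ 128 * |c - 1| :=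
        aux_lip (by linarith) (by linarith) hc'
      have h2 : |c - 1| ≤ |t - 1| := by
        rw [Set.mem_uIcc] at hc
        rcases hc with ⟨ha, hb⟩ | ⟨ha, hb⟩
        · rw [abs_of_nonpos (by linarith), abs_of_nonpos (by linarith)]; linarith
        · rw [abs_of_nonneg (by linarith), abs_of_nonneg (by linarith)]; linarith
      have h3 : ‖q * c ^ (q - 1) - q‖ = q * |c ^ (q - 1) - 1| := by
        rw [Real.norm_eq_abs, show q * c ^ (q-1) - q = q * (c ^ (q-1) - 1) by ring,
          abs_mul, abs_of_pos hq0]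
      rw [h3]
      rw [Real.one_rpow] at h1
      nlinarith [abs_nonneg (c - 1), abs_nonneg (c ^ (q-1) - 1)])
    (convex_uIcc _ _) left_mem_uIcc right_mem_uIcc
  simp only [Real.norm_eq_abs, Real.one_rpow] at key
  calc |t ^ q - 1 - q * (t - 1)| = |(1 - q * 1) - (t ^ q - q * t)| := by
        rw [abs_sub_comm]; ring_nf
      _ ≤ 64 * |t - 1| * |1 - t| := key
      _ ≤ 64 * (t - 1) ^ 2 := by
        have : |1 - t| * |1 - t| = (t - 1) ^ 2 := by
          rw [← abs_mul, show (1-t)*(1-t) = (t-1)^2 by ring, abs_of_nonneg (sq_nonneg _)]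
        rw [abs_sub_comm t 1]; nlinarith [this]

lemma aux_core (p : ℝ) (hp1 : 1 < p) (hp2 : p ≤ 2) (δ : ℂ)
    (hδ : ‖δ‖ ≤ 1/2) :
    ‖(↑(‖1 + δ‖ ^ (p - 1)) : ℂ) * (1 + δ) - 1
      - (((p + 1) / 2 : ℝ) : ℂ) * δ
      - (((p - 1) / 2 : ℝ) : ℂ) * (starRingEnd ℂ) δ‖
      ≤ 700 * ‖δ‖ ^ 2 := by
  set q : ℝ := (p - 1) / 2 with hqdef
  have hq0 : 0 < q := by rw [hqdef]; linarith
  have hq1 : q ≤ 1/2 := by rw [hqdef]; linarith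
  set a : ℝ := ‖1 + δ‖ with hadef
  have ha0 : 0 ≤ a := norm_nonneg _
  have ha1 : 1/2 ≤ a := by
    have h : ‖(1 + δ) + (-δ)‖ ≤ ‖1 + δ‖ + ‖-δ‖ :=
      norm_add_le _ _
    rw [show (1:ℂ) + δ + -δ = 1 by ring, norm_one, norm_neg] at h
    linarith
  have ha2 : a ≤ 3/2 := by
    have h := norm_add_le 1 δ
    rw [norm_one] at h
    linarith
  set t : ℝ := a ^ 2 with htdef
  have ht : t ∈ Icc (1/4:ℝ) (9/4) := by
    constructor <;> [nlinarith; nlinarith]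
  have hkey : a ^ (p - 1) = t ^ q := by
    rw [htdef, ← Real.rpow_natCast a 2, ← Real.rpow_mul ha0, hqdef]
    norm_num
    congr 1
    ring
  set s : ℝ := t - 1 with hsdef
  have hsC : (s : ℂ) = δ + (starRingEnd ℂ) δ + δ * (starRingEnd ℂ) δ := by
    have h1 : (t : ℂ) = (1 + δ) * (starRingEnd ℂ) (1 + δ) := by
      rw [Complex.mul_conj, htdef, ← Complex.sq_norm, ← hadef]
    have h2 : (starRingEnd ℂ) (1 + δ) = 1 + (starRingEnd ℂ) δ := by
      rw [map_add, map_one]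
    rw [hsdef]
    push_cast
    rw [h1, h2]; ring
  have hsabs : |s| ≤ 5/2 * ‖δ‖ := by
    have : |s| = ‖(s : ℂ)‖ := by rw [Complex.norm_real, Real.norm_eq_abs]
    rw [this, hsC]
    calc ‖δ + (starRingEnd ℂ) δ + δ * (starRingEnd ℂ) δ‖
        ≤ ‖δ + (starRingEnd ℂ) δ‖ + ‖δ * (starRingEnd ℂ) δ‖ :=
          norm_add_le _ _
      _ ≤ ‖δ‖ + ‖(starRingEnd ℂ) δ‖
            + ‖δ‖ * ‖(starRingEnd ℂ) δ‖ := by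
          rw [norm_mul]
          exact add_le_add_left (norm_add_le _ _) _
      _ ≤ 5/2 * ‖δ‖ := by
          rw [Complex.norm_conj]
          nlinarith [norm_nonneg δ]
  set r : ℝ := t ^ q - 1 - q * s with hrdef
  have hr : |r| ≤ 400 * ‖δ‖ ^ 2 := by
    have h := aux_taylor hq0 hq1 ht
    rw [← hsdef] at h
    rw [hrdef]
    have hs2 : s ^ 2 ≤ 25/4 * ‖δ‖ ^ 2 := by
      nlinarith [abs_nonneg s, sq_abs s, norm_nonneg δ]
    calc |r| ≤ 64 * s ^ 2 := h
      _ ≤ 400 * ‖δ‖ ^ 2 := by nlinarith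
  have hXeq : (↑(a ^ (p - 1)) : ℂ) * (1 + δ) - 1
      - (((p + 1) / 2 : ℝ) : ℂ) * δ
      - (((p - 1) / 2 : ℝ) : ℂ) * (starRingEnd ℂ) δ
      = (q:ℂ) * (δ * (starRingEnd ℂ) δ) + (q:ℂ) * (s:ℂ) * δ + (r:ℂ) * (1 + δ) := by
    have h1 : (↑(a ^ (p - 1)) : ℂ) = 1 + (q:ℂ) * (s:ℂ) + (r:ℂ) := by
      rw [hkey, hrdef]; push_cast; ring
    have hc1 : (((p + 1) / 2 : ℝ) : ℂ) = 1 + (q:ℂ) := by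
      rw [hqdef]; push_cast; ring
    have hc2 : (((p - 1) / 2 : ℝ) : ℂ) = (q:ℂ) := by rw [hqdef]
    rw [h1, hc1, hc2, hsC]; ring
  rw [hXeq]
  have hd0 : (0:ℝ) ≤ ‖δ‖ := norm_nonneg δ
  calc ‖(q:ℂ) * (δ * (starRingEnd ℂ) δ) + (q:ℂ) * (s:ℂ) * δ + (r:ℂ) * (1 + δ)‖
      ≤ ‖(q:ℂ) * (δ * (starRingEnd ℂ) δ) + (q:ℂ) * (s:ℂ) * δ‖
          + ‖(r:ℂ) * (1 + δ)‖ := norm_add_le _ _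
    _ ≤ ‖(q:ℂ) * (δ * (starRingEnd ℂ) δ)‖ + ‖(q:ℂ) * (s:ℂ) * δ‖
          + ‖(r:ℂ) * (1 + δ)‖ :=
        add_le_add_left (norm_add_le _ _) _
    _ = |q| * (‖δ‖ * ‖δ‖) + |q| * |s| * ‖δ‖
          + |r| * a := by
        simp only [norm_mul, Complex.norm_real, Real.norm_eq_abs, Complex.norm_conj, ← hadef]
    _ ≤ 700 * ‖δ‖ ^ 2 := by
        rw [abs_of_pos hq0]
        have e2 : q * |s| * ‖δ‖ ≤ 5/4 * ‖δ‖ ^ 2 := by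
          have h5 : q * |s| ≤ (1/2) * (5/2 * ‖δ‖) :=
            mul_le_mul hq1 hsabs (abs_nonneg s) (by norm_num)
          nlinarith [abs_nonneg s]
        have e3 : |r| * a ≤ 600 * ‖δ‖ ^ 2 := by
          have h6 : |r| * a ≤ (400 * ‖δ‖ ^ 2) * (3/2) :=
            mul_le_mul hr ha2 ha0 (by positivity)
          nlinarith
        nlinarith [sq_nonneg (‖δ‖)]

/-- Expansion of the low-power nonlinearity `F(w) = |w|^{p-1}w`, `1 < p ≤ 2`,
with remainder of order `|ε|^p`, uniformly in the base point. -/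
theorem stmt8 (p : ℝ) (hp1 : 1 < p) (hp2 : p ≤ 2) :
    ∃ C : ℝ, 0 < C ∧ ∀ P ε : ℂ,
      (‖ε‖ ≤ ‖P‖ / 2 →
        ‖
          ((↑(‖P + ε‖ ^ (p - 1)) : ℂ) * (P + ε)
            - (↑(‖P‖ ^ (p - 1)) : ℂ) * P
            - (((p + 1) / 2 : ℝ) : ℂ) * (↑(‖P‖ ^ (p - 1)) : ℂ) * ε
            - (((p - 1) / 2 : ℝ) : ℂ) * (↑(‖P‖ ^ (p - 3)) : ℂ) * P ^ 2
                * (starRingEnd ℂ) ε)‖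
          ≤ C * ‖ε‖ ^ p) ∧
      (‖P‖ / 2 < ‖ε‖ →
        ‖
          ((↑(‖P + ε‖ ^ (p - 1)) : ℂ) * (P + ε)
            - (↑(‖P‖ ^ (p - 1)) : ℂ) * P)‖
          ≤ C * ‖ε‖ ^ p) := by
  have hp0 : (0:ℝ) < p := by linarith
  refine ⟨700, by norm_num, fun P ε => ⟨?_, ?_⟩⟩
  · -- near case
    intro hne
    rcases eq_or_ne P 0 with hP | hP
    · -- P = 0 forces ε = 0
      have hε : ε = 0 := by
        have h0 : ‖ε‖ ≤ 0 := by
          rw [hP] at hne; simpa using hne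
        have := norm_nonneg ε
        have : ‖ε‖ = 0 := le_antisymm h0 this
        exact norm_eq_zero.mp this
      rw [hP, hε]
      simp [Real.zero_rpow hp0.ne']
    · have habsP : (0:ℝ) < ‖P‖ := norm_pos_iff.mpr hP
      set δ : ℂ := ε / P with hδdef
      have hε : ε = P * δ := by rw [hδdef, mul_div_cancel₀ ε hP]
      have hδ : ‖δ‖ ≤ 1/2 := by
        rw [hδdef, norm_div, div_le_iff₀ habsP]
        linarith
      have hcore := aux_core p hp1 hp2 δ hδ
      have hPE : P + ε = P * (1 + δ) := by rw [hε]; ring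
      have hA : ‖P + ε‖ ^ (p - 1)
          = ‖P‖ ^ (p - 1) * ‖1 + δ‖ ^ (p - 1) := by
        rw [hPE, norm_mul, Real.mul_rpow (norm_nonneg _) (norm_nonneg _)]
      have hch : (↑(‖P‖ ^ (p - 3)) : ℂ) * (P ^ 2 * (starRingEnd ℂ) P)
          = (↑(‖P‖ ^ (p - 1)) : ℂ) * P := by
        have h1 : P ^ 2 * (starRingEnd ℂ) P = (↑(‖P‖ ^ 2) : ℂ) * P := by
          rw [show P ^ 2 * (starRingEnd ℂ) P = (P * (starRingEnd ℂ) P) * P by ring,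
            Complex.mul_conj, Complex.normSq_eq_norm_sq]
        have h2 : ‖P‖ ^ (p - 3) * (‖P‖ ^ 2 : ℝ)
            = ‖P‖ ^ (p - 1) := by
          rw [← Real.rpow_natCast (‖P‖) 2, ← Real.rpow_add habsP]
          congr 1
          ring
        rw [h1, ← h2]
        push_cast; ring
      have hfac : (↑(‖P + ε‖ ^ (p - 1)) : ℂ) * (P + ε)
            - (↑(‖P‖ ^ (p - 1)) : ℂ) * P
            - (((p + 1) / 2 : ℝ) : ℂ) * (↑(‖P‖ ^ (p - 1)) : ℂ) * ε
            - (((p - 1) / 2 : ℝ) : ℂ) * (↑(‖P‖ ^ (p - 3)) : ℂ) * P ^ 2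
                * (starRingEnd ℂ) ε
          = (↑(‖P‖ ^ (p - 1)) : ℂ) * P
              * ((↑(‖1 + δ‖ ^ (p - 1)) : ℂ) * (1 + δ) - 1
                - (((p + 1) / 2 : ℝ) : ℂ) * δ
                - (((p - 1) / 2 : ℝ) : ℂ) * (starRingEnd ℂ) δ) := by
        rw [hA, hPE, hε, map_mul (starRingEnd ℂ)]
        push_cast
        linear_combination (-(((p:ℂ) - 1) / 2)) * (starRingEnd ℂ) δ * hch
      rw [hfac, norm_mul, norm_mul, Complex.norm_real, Real.norm_eq_abs,
        abs_of_nonneg (Real.rpow_nonneg (norm_nonneg P) _)]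
      have hδ2p : ‖δ‖ ^ 2 ≤ ‖δ‖ ^ p := by
        rcases eq_or_ne δ 0 with h0 | h0
        · rw [h0, norm_zero, Real.zero_rpow hp0.ne']
          norm_num
        · have hpos : 0 < ‖δ‖ := norm_pos_iff.mpr h0
          have := Real.rpow_le_rpow_of_exponent_ge hpos (by linarith) hp2
          rwa [show ‖δ‖ ^ (2:ℝ)
            = ‖δ‖ ^ (2:ℕ) by rw [← Real.rpow_natCast]; norm_num] at this
      have hmul : ‖P‖ ^ (p - 1) * ‖P‖ = ‖P‖ ^ p := by
        rw [show ‖P‖ ^ (p-1) * ‖P‖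
          = ‖P‖ ^ (p-1) * ‖P‖ ^ (1:ℝ) by rw [Real.rpow_one],
          ← Real.rpow_add habsP]
        norm_num
      have hsplit : ‖ε‖ ^ p = ‖P‖ ^ p * ‖δ‖ ^ p := by
        rw [hε, norm_mul, Real.mul_rpow (norm_nonneg _) (norm_nonneg _)]
      have hPp : (0:ℝ) ≤ ‖P‖ ^ p := Real.rpow_nonneg (norm_nonneg _) _
      calc ‖P‖ ^ (p - 1) * ‖P‖
            * ‖(↑(‖1 + δ‖ ^ (p - 1)) : ℂ) * (1 + δ) - 1
                - (((p + 1) / 2 : ℝ) : ℂ) * δ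
                - (((p - 1) / 2 : ℝ) : ℂ) * (starRingEnd ℂ) δ‖
          ≤ ‖P‖ ^ (p - 1) * ‖P‖ * (700 * ‖δ‖ ^ 2) := by
            apply mul_le_mul_of_nonneg_left hcore
            positivity
        _ = ‖P‖ ^ p * (700 * ‖δ‖ ^ 2) := by rw [hmul]
        _ ≤ ‖P‖ ^ p * (700 * ‖δ‖ ^ p) := by
            apply mul_le_mul_of_nonneg_left _ hPp
            linarith
        _ = 700 * ‖ε‖ ^ p := by rw [hsplit]; ring
  · -- far case
    intro hfar
    have h3 : ‖P + ε‖ ≤ 3 * ‖ε‖ := by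
      have := norm_add_le P ε
      linarith
    have h2 : ‖P‖ ≤ 2 * ‖ε‖ := by linarith
    have hε0 : (0:ℝ) ≤ ‖ε‖ := norm_nonneg ε
    have key : ∀ z : ℂ, ‖(↑(‖z‖ ^ (p-1)) : ℂ) * z‖
        = ‖z‖ ^ p := by
      intro z
      rw [norm_mul, Complex.norm_real, Real.norm_eq_abs,
        abs_of_nonneg (Real.rpow_nonneg (norm_nonneg z) _)]
      rw [show ‖z‖ ^ (p-1) * ‖z‖
          = ‖z‖ ^ (p-1) * ‖z‖ ^ (1:ℝ) by rw [Real.rpow_one],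
        ← Real.rpow_add' (norm_nonneg z) (by norm_num; linarith)]
      norm_num
    have t1 : ‖P + ε‖ ^ p ≤ 9 * ‖ε‖ ^ p := by
      calc ‖P + ε‖ ^ p ≤ (3 * ‖ε‖) ^ p :=
            Real.rpow_le_rpow (norm_nonneg _) h3 hp0.le
        _ = (3:ℝ) ^ p * ‖ε‖ ^ p := Real.mul_rpow (by norm_num) hε0
        _ ≤ 9 * ‖ε‖ ^ p := by
            have : (3:ℝ) ^ p ≤ (3:ℝ) ^ (2:ℝ) :=
              Real.rpow_le_rpow_of_exponent_le (by norm_num) hp2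
            have h9 : (3:ℝ) ^ (2:ℝ) = 9 := by
              rw [show (2:ℝ) = ((2:ℕ):ℝ) by norm_num, Real.rpow_natCast]; norm_num
            have hεp : (0:ℝ) ≤ ‖ε‖ ^ p := Real.rpow_nonneg hε0 _
            nlinarith
    have t2 : ‖P‖ ^ p ≤ 4 * ‖ε‖ ^ p := by
      calc ‖P‖ ^ p ≤ (2 * ‖ε‖) ^ p :=
            Real.rpow_le_rpow (norm_nonneg _) h2 hp0.le
        _ = (2:ℝ) ^ p * ‖ε‖ ^ p := Real.mul_rpow (by norm_num) hε0
        _ ≤ 4 * ‖ε‖ ^ p := by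
            have : (2:ℝ) ^ p ≤ (2:ℝ) ^ (2:ℝ) :=
              Real.rpow_le_rpow_of_exponent_le (by norm_num) hp2
            have h4 : (2:ℝ) ^ (2:ℝ) = 4 := by
              rw [show (2:ℝ) = ((2:ℕ):ℝ) by norm_num, Real.rpow_natCast]; norm_num
            have hεp : (0:ℝ) ≤ ‖ε‖ ^ p := Real.rpow_nonneg hε0 _
            nlinarith
    calc ‖(↑(‖P + ε‖ ^ (p - 1)) : ℂ) * (P + ε)
            - (↑(‖P‖ ^ (p - 1)) : ℂ) * P‖
        ≤ ‖(↑(‖P + ε‖ ^ (p - 1)) : ℂ) * (P + ε)‖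
            + ‖(↑(‖P‖ ^ (p - 1)) : ℂ) * P‖ := by
          have := norm_add_le ((↑(‖P + ε‖ ^ (p - 1)) : ℂ) * (P + ε))
            (-((↑(‖P‖ ^ (p - 1)) : ℂ) * P))
          rw [norm_neg] at this
          simpa [sub_eq_add_neg] using this
      _ = ‖P + ε‖ ^ p + ‖P‖ ^ p := by rw [key, key]
      _ ≤ 700 * ‖ε‖ ^ p := by
          have hεp : (0:ℝ) ≤ ‖ε‖ ^ p := Real.rpow_nonneg hε0 _
          linarith
end

section
/- Suppose z_mod : [s₀, ∞) → (0, ∞) is differentiable, d ≥ 1, c > 0, and satisfies z_mod(s)^{-(d-1)/2} e^{-z_mod(s)} = s^{-2}/c for all s ≥ s₀ with z_mod(s₀) ≥ 2. Then, setting v_mod(s) = s^{-1}, there is C such that |z'_mod(s) - 2 v_mod(s)| ≤ C s^{-1} (log s)^{-1} for all sufficiently large s. -/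
/-- If `z_mod(s)^{-(d-1)/2} e^{-z_mod(s)} = s^{-2}/c`, then with
`v_mod(s) = s⁻¹`, one has `|z'_mod - 2 v_mod| ≲ s⁻¹ (log s)⁻¹` for large `s`. -/
theorem stmt11 (d : ℕ) (hd : 1 ≤ d) (c s₀ : ℝ) (hc : 0 < c) (hs₀ : 1 < s₀)
    (z : ℝ → ℝ) (hzpos : ∀ s, s₀ ≤ s → 0 < z s)
    (hzdiff : ∀ s, s₀ ≤ s → DifferentiableAt ℝ z s)
    (hrel : ∀ s, s₀ ≤ s →
      z s ^ (-((d:ℝ) - 1) / 2) * Real.exp (-z s) = s ^ (-(2:ℝ)) / c)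
    (hinit : 2 ≤ z s₀) :
    ∃ C : ℝ, 0 < C ∧ ∃ s₁ : ℝ, s₀ ≤ s₁ ∧ ∀ s, s₁ ≤ s →
      |deriv z s - 2 * s⁻¹| ≤ C * s⁻¹ * (Real.log s)⁻¹ := by
  set a : ℝ := ((d:ℝ) - 1) / 2 with ha_def
  have hd1 : (1:ℝ) ≤ (d:ℝ) := by exact_mod_cast hd
  have ha : 0 ≤ a := by rw [ha_def]; linarith
  -- logarithmic form of the relation
  have hlog : ∀ s, s₀ ≤ s → z s + a * Real.log (z s) = 2 * Real.log s + Real.log c := by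
    intro s hs
    have hz := hzpos s hs
    have hspos : (0:ℝ) < s := lt_trans one_pos (lt_of_lt_of_le hs₀ hs)
    have h := hrel s hs
    have hexp : -((d:ℝ) - 1) / 2 = -a := by rw [ha_def]; ring
    rw [hexp] at h
    have hL : Real.log (z s ^ (-a : ℝ) * Real.exp (-z s))
        = -a * Real.log (z s) - z s := by
      rw [Real.log_mul (by positivity) (Real.exp_ne_zero _), Real.log_rpow hz,
        Real.log_exp]
      ring
    have hR : Real.log (s ^ (-(2:ℝ)) / c) = -2 * Real.log s - Real.log c := by
      rw [Real.log_div (by positivity) (ne_of_gt hc), Real.log_rpow hspos]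
    have : -a * Real.log (z s) - z s = -2 * Real.log s - Real.log c := by
      rw [← hL, ← hR, h]
    linarith
  -- derivative identity
  have key : ∀ s, s₀ < s → deriv z s * (1 + a / z s) = 2 * s⁻¹ := by
    intro s hs
    have hz := hzpos s hs.le
    have hspos : (0:ℝ) < s := lt_trans one_pos (lt_trans hs₀ hs)
    have hdz : HasDerivAt z (deriv z s) s := (hzdiff s hs.le).hasDerivAt
    have hd2 : HasDerivAt (fun t => z t + a * Real.log (z t))
        (deriv z s + a * (deriv z s / z s)) s :=
      hdz.add ((hdz.log hz.ne').const_mul a)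
    have heq : (fun t => z t + a * Real.log (z t))
        =ᶠ[nhds s] (fun t => 2 * Real.log t + Real.log c) := by
      filter_upwards [eventually_gt_nhds hs] with t ht
      exact hlog t ht.le
    have hd2' : HasDerivAt (fun t => 2 * Real.log t + Real.log c)
        (deriv z s + a * (deriv z s / z s)) s :=
      hd2.congr_of_eventuallyEq heq.symm
    have hd3 : HasDerivAt (fun t => 2 * Real.log t + Real.log c) (2 * s⁻¹) s := by
      have h1 := (Real.hasDerivAt_log (ne_of_gt hspos)).const_mul (2:ℝ)
      simpa [mul_comm] using h1.add_const (Real.log c)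
    have huniq : deriv z s + a * (deriv z s / z s) = 2 * s⁻¹ := hd2'.unique hd3
    have : deriv z s * (1 + a / z s) = deriv z s + a * (deriv z s / z s) := by ring
    rw [this, huniq]
  -- lower bound on z
  have hzlb : ∀ s, s₀ ≤ s → max 2 (-Real.log c) ≤ Real.log s →
      Real.log s / (1 + a) ≤ z s := by
    intro s hs hls
    have hz := hzpos s hs
    have h2 : (2:ℝ) ≤ Real.log s := le_trans (le_max_left _ _) hls
    have hmc : -Real.log c ≤ Real.log s := le_trans (le_max_right _ _) hls
    have hzr := hlog s hs
    have hR1 : (1:ℝ) ≤ 2 * Real.log s + Real.log c := by linarith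
    have hz1 : (1:ℝ) ≤ z s := by
      by_contra hlt
      push_neg at hlt
      have hlz : Real.log (z s) < 0 := Real.log_neg hz hlt
      nlinarith
    have hlogz : Real.log (z s) ≤ z s := by
      have := Real.log_le_sub_one_of_pos hz
      linarith
    have hzge : 2 * Real.log s + Real.log c ≤ (1 + a) * z s := by nlinarith
    have hsge : Real.log s ≤ 2 * Real.log s + Real.log c := by linarith
    rw [div_le_iff₀ (by linarith : (0:ℝ) < 1 + a)]
    nlinarith
  refine ⟨2 * a * (1 + a) + 1, by positivity,
    max (s₀ + 1) (Real.exp (max 2 (-Real.log c))), le_trans (by linarith) (le_max_left _ _),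
    ?_⟩
  intro s hs
  have hs0' : s₀ < s := lt_of_lt_of_le (by linarith) (le_trans (le_max_left _ _) hs)
  have hspos : (0:ℝ) < s := lt_trans one_pos (lt_trans hs₀ hs0')
  have hls : max 2 (-Real.log c) ≤ Real.log s :=
    (Real.le_log_iff_exp_le hspos).2 (le_trans (le_max_right _ _) hs)
  have hlogpos : (0:ℝ) < Real.log s := lt_of_lt_of_le (by norm_num) (le_trans (le_max_left _ _) hls)
  have hz := hzpos s hs0'.le
  have hw := hzlb s hs0'.le hls
  have hwpos : 0 < Real.log s / (1 + a) := by positivity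
  have hq : 0 ≤ a / z s := by positivity
  have hden : (0:ℝ) < 1 + a / z s := by linarith
  have h5 : (deriv z s - 2 * s⁻¹) * (1 + a / z s) = -(2 * s⁻¹ * (a / z s)) := by
    linear_combination key s hs0'
  have hderiv : deriv z s - 2 * s⁻¹ = -(2 * s⁻¹ * (a / z s)) / (1 + a / z s) :=
    (eq_div_iff hden.ne').2 h5
  rw [hderiv, abs_div, abs_neg, abs_of_nonneg (by positivity),
    abs_of_pos hden]
  have step1 : 2 * s⁻¹ * (a / z s) / (1 + a / z s) ≤ 2 * s⁻¹ * (a / z s) :=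
    div_le_self (by positivity) (by linarith)
  have step2 : a / z s ≤ a * (1 + a) / Real.log s := by
    have h1 : a / z s ≤ a / (Real.log s / (1 + a)) := by
      gcongr
    calc a / z s ≤ a / (Real.log s / (1 + a)) := h1
      _ = a * (1 + a) / Real.log s := by
          rw [div_div_eq_mul_div]
  have step3 : 2 * s⁻¹ * (a / z s) ≤ 2 * s⁻¹ * (a * (1 + a) / Real.log s) := by
    gcongr
  have step4 : 2 * s⁻¹ * (a * (1 + a) / Real.log s)
      ≤ (2 * a * (1 + a) + 1) * s⁻¹ * (Real.log s)⁻¹ := by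
    rw [div_eq_mul_inv]
    have : 2 * s⁻¹ * (a * (1 + a) * (Real.log s)⁻¹)
        = (2 * a * (1 + a)) * s⁻¹ * (Real.log s)⁻¹ := by ring
    rw [this]
    exact mul_le_mul_of_nonneg_right
      (mul_le_mul_of_nonneg_right (by linarith) (by positivity)) (by positivity)
  linarith
end

section
/- If z_mod : [s₀, ∞) → (0, ∞) satisfies z_mod(s)^{-(d-1)/2} e^{-z_mod(s)} = s^{-2}/c for all s ≥ s₀ (with c > 0, d ≥ 1, s₀ large), then z_mod(s) = 2 log s - ((d-1)/2) log log s + O(1) as s → ∞; in particular z_mod(s)/log s → 2. -/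
/-- Take logs in the relation `z^{-a} e^{-z} = s^{-2}/c`. -/
lemma stmt12_key (a c s z : ℝ) (hc : 0 < c) (hs : 0 < s) (hz : 0 < z)
    (h : z ^ (-a) * Real.exp (-z) = s ^ (-(2:ℝ)) / c) :
    z + a * Real.log z = 2 * Real.log s + Real.log c := by
  rw [Real.rpow_def_of_pos hz, Real.rpow_def_of_pos hs, ← Real.exp_add] at h
  have hcexp : c = Real.exp (Real.log c) := (Real.exp_log hc).symm
  rw [hcexp, ← Real.exp_sub] at h
  have := Real.exp_eq_exp.mp h
  linarith

/-- Pointwise quantitative bound. -/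
lemma stmt12_point (a c : ℝ) (ha : 0 ≤ a) (s z : ℝ)
    (hls : 16 * a ^ 2 + |Real.log c| + 2 ≤ Real.log s)
    (hz : 0 < z)
    (hZ : z + a * Real.log z = 2 * Real.log s + Real.log c) :
    (|z - (2 * Real.log s - a * Real.log (Real.log s))| ≤ |Real.log c| + 2 * a)
    ∧ Real.log s ≤ z + a * Real.log z ∧ z ≤ 3 * Real.log s := by
  have ha2 : (0:ℝ) ≤ 16 * a ^ 2 := by positivity
  have habs : (0:ℝ) ≤ |Real.log c| := abs_nonneg _
  set ls := Real.log s with hlsdef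
  have h2 : (2:ℝ) ≤ ls := by linarith
  have hlc : |Real.log c| ≤ ls := by linarith
  have hnc : -|Real.log c| ≤ Real.log c := neg_abs_le _
  have hcabs : Real.log c ≤ |Real.log c| := le_abs_self _
  set L := 2 * ls + Real.log c with hLdef
  have hL1 : ls + 16 * a ^ 2 + 2 ≤ L := by simp only [hLdef]; linarith
  have hLpos : 0 < L := by linarith
  have hL2 : (2:ℝ) ≤ L := by linarith
  have hL16 : 16 * a ^ 2 ≤ L := by linarith
  have hL3 : L ≤ 3 * ls := by simp only [hLdef]; linarith
  have hLls : ls ≤ L := by linarith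
  -- z > 1
  have hz1 : 1 < z := by
    by_contra hcon
    push_neg at hcon
    have hlz : Real.log z ≤ 0 := Real.log_nonpos hz.le hcon
    have : a * Real.log z ≤ 0 := mul_nonpos_of_nonneg_of_nonpos ha hlz
    have : L ≤ 1 := by rw [hLdef]; linarith
    linarith
  have hlogz0 : 0 ≤ Real.log z := Real.log_nonneg hz1.le
  have halogz0 : 0 ≤ a * Real.log z := mul_nonneg ha hlogz0
  have hzL : z ≤ L := by rw [hLdef]; linarith
  have hlogzL : Real.log z ≤ Real.log L := Real.log_le_log hz hzL
  -- a * log L ≤ L / 2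
  have hsq : 4 * a ≤ Real.sqrt L := by
    rw [Real.le_sqrt (by linarith) hLpos.le]
    nlinarith
  have hsqpos : 0 < Real.sqrt L := Real.sqrt_pos.mpr hLpos
  have hsq2 : Real.sqrt L ^ 2 = L := Real.sq_sqrt hLpos.le
  have hlogL : Real.log L ≤ 2 * Real.sqrt L := by
    have h1 : Real.log (Real.sqrt L) ≤ Real.sqrt L - 1 :=
      Real.log_le_sub_one_of_pos hsqpos
    have h2' : Real.log L = 2 * Real.log (Real.sqrt L) := by
      rw [Real.log_sqrt hLpos.le]; ring
    linarith
  have halogL : a * Real.log L ≤ L / 2 := by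
    have h1 : a * Real.log L ≤ a * (2 * Real.sqrt L) :=
      mul_le_mul_of_nonneg_left hlogL ha
    nlinarith [Real.sqrt_nonneg L]
  have halogzL : a * Real.log z ≤ a * Real.log L :=
    mul_le_mul_of_nonneg_left hlogzL ha
  have hzlow : L / 2 ≤ z := by rw [hLdef]; linarith [halogL, halogzL]
  -- bounds on log z - log ls
  have hlogz_low : Real.log L - Real.log 2 ≤ Real.log z := by
    have h1 : Real.log (L / 2) ≤ Real.log z :=
      Real.log_le_log (by linarith) hzlow
    rwa [Real.log_div (by linarith) (by norm_num)] at h1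
  have hlog2 : Real.log 2 ≤ 1 := by
    have := Real.log_le_sub_one_of_pos (x := 2) (by norm_num); linarith
  have hlog3 : Real.log 3 ≤ 2 := by
    have := Real.log_le_sub_one_of_pos (x := 3) (by norm_num); linarith
  have hlsL : Real.log ls ≤ Real.log L := Real.log_le_log (by linarith) hLls
  have hlogL3 : Real.log L ≤ Real.log 3 + Real.log ls := by
    have h1 : Real.log L ≤ Real.log (3 * ls) := Real.log_le_log hLpos hL3
    rwa [Real.log_mul (by norm_num) (by linarith)] at h1
  set t := Real.log z - Real.log ls with htdef
  have ht_up : t ≤ 2 := by simp only [htdef]; linarith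
  have ht_low : -2 ≤ t := by simp only [htdef]; linarith
  have hat_up : a * t ≤ a * 2 := mul_le_mul_of_nonneg_left ht_up ha
  have hat_low : a * (-2) ≤ a * t := mul_le_mul_of_nonneg_left ht_low ha
  have heq : z - (2 * ls - a * Real.log ls) = Real.log c - a * t := by
    have hat : a * t = a * Real.log z - a * Real.log ls := by
      simp only [htdef]; ring
    linarith
  refine ⟨?_, ?_, by linarith⟩
  · rw [heq, abs_le]
    constructor <;> linarith
  · linarith

/-- Asymptotic inversion of `z^{(d-1)/2} e^{z} = c s²`:
`z(s) = 2 log s - ((d-1)/2) log log s + O(1)`, and `z(s)/log s → 2`. -/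
theorem stmt12 (d : ℕ) (hd : 1 ≤ d) (c s₀ : ℝ) (hc : 0 < c)
    (hs₀ : Real.exp 2 < s₀)
    (z : ℝ → ℝ) (hzpos : ∀ s, s₀ ≤ s → 0 < z s)
    (hrel : ∀ s, s₀ ≤ s →
      z s ^ (-((d:ℝ) - 1) / 2) * Real.exp (-z s) = s ^ (-(2:ℝ)) / c) :
    (∃ C : ℝ, 0 < C ∧ ∃ s₁ : ℝ, s₀ ≤ s₁ ∧ ∀ s, s₁ ≤ s →
      |z s - (2 * Real.log s - ((d:ℝ) - 1) / 2 * Real.log (Real.log s))| ≤ C) ∧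
    Filter.Tendsto (fun s => z s / Real.log s) Filter.atTop (nhds 2) := by
  set a : ℝ := ((d:ℝ) - 1) / 2 with hadef
  have ha : 0 ≤ a := by
    have : (1:ℝ) ≤ (d:ℝ) := by exact_mod_cast hd
    simp only [hadef]; linarith
  set M : ℝ := 16 * a ^ 2 + |Real.log c| + 2 with hMdef
  set s₁ : ℝ := max s₀ (Real.exp M) with hs₁def
  have hs₀pos : 0 < s₀ := lt_trans (Real.exp_pos 2) hs₀
  have hs₀s₁ : s₀ ≤ s₁ := le_max_left _ _
  -- pointwise facts for s ≥ s₁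
  have hmain : ∀ s, s₁ ≤ s →
      |z s - (2 * Real.log s - a * Real.log (Real.log s))| ≤ |Real.log c| + 2 * a
      ∧ Real.log s ≤ z s + a * Real.log (z s) ∧ z s ≤ 3 * Real.log s := by
    intro s hs
    have hss₀ : s₀ ≤ s := le_trans hs₀s₁ hs
    have hspos : 0 < s := lt_of_lt_of_le hs₀pos hss₀
    have hls : M ≤ Real.log s :=
      (Real.le_log_iff_exp_le hspos).mpr (le_trans (le_max_right _ _) hs)
    have hzs := hzpos s hss₀
    have hrels := hrel s hss₀
    have hexp : (-((d:ℝ) - 1) / 2) = -a := by simp only [hadef]; ring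
    rw [hexp] at hrels
    have hZ := stmt12_key a c s (z s) hc hspos hzs hrels
    exact stmt12_point a c ha s (z s) hls hzs hZ
  constructor
  · exact ⟨|Real.log c| + 2 * a + 1, by positivity, s₁, hs₀s₁,
      fun s hs => le_trans ((hmain s hs).1) (by linarith)⟩
  · -- z s / log s → 2
    -- |z s / log s - 2| ≤ (|log c| + 2a + a * log (log s)) / log s  eventually
    have hlogtop : Filter.Tendsto Real.log Filter.atTop Filter.atTop :=
      Real.tendsto_log_atTop
    have hginv : Filter.Tendsto (fun s => (Real.log s)⁻¹) Filter.atTop (nhds 0) :=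
      tendsto_inv_atTop_zero.comp hlogtop
    have hloglog : Filter.Tendsto (fun s => Real.log (Real.log s) / Real.log s)
        Filter.atTop (nhds 0) :=
      (Real.isLittleO_log_id_atTop.tendsto_div_nhds_zero).comp hlogtop
    have hg : Filter.Tendsto
        (fun s => (|Real.log c| + 2 * a) * (Real.log s)⁻¹
          + a * (Real.log (Real.log s) / Real.log s)) Filter.atTop (nhds 0) := by
      have := (hginv.const_mul (|Real.log c| + 2 * a)).add (hloglog.const_mul a)
      simpa using this
    have hev : ∀ᶠ s in Filter.atTop,
        |z s / Real.log s - 2| ≤ (|Real.log c| + 2 * a) * (Real.log s)⁻¹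
          + a * (Real.log (Real.log s) / Real.log s) := by
      filter_upwards [Filter.eventually_ge_atTop s₁,
        Filter.eventually_ge_atTop (max 1 (Real.exp 2))] with s hs hs'
      obtain ⟨h1, h2, h3⟩ := hmain s hs
      have hspos : (0:ℝ) < s := lt_of_lt_of_le one_pos (le_trans (le_max_left _ _) hs')
      have hls2 : (2:ℝ) ≤ Real.log s :=
        (Real.le_log_iff_exp_le hspos).mpr (le_trans (le_max_right _ _) hs')
      have hlspos : (0:ℝ) < Real.log s := by linarith
      have hllpos : 0 ≤ Real.log (Real.log s) := Real.log_nonneg (by linarith)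
      -- from h1: |z s - 2 log s + a log log s| ≤ |log c| + 2a
      have habs := abs_le.mp h1
      have hub : z s - 2 * Real.log s ≤ |Real.log c| + 2 * a
          + a * Real.log (Real.log s) := by
        have := habs.2
        nlinarith [mul_nonneg ha hllpos]
      have hlb : -(|Real.log c| + 2 * a + a * Real.log (Real.log s))
          ≤ z s - 2 * Real.log s := by
        have := habs.1
        nlinarith [mul_nonneg ha hllpos]
      have hdiv : z s / Real.log s - 2 = (z s - 2 * Real.log s) / Real.log s := by
        field_simp
      have hmulg : ((|Real.log c| + 2 * a) * (Real.log s)⁻¹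
          + a * (Real.log (Real.log s) / Real.log s)) * Real.log s
          = |Real.log c| + 2 * a + a * Real.log (Real.log s) := by
        field_simp
      rw [abs_le, hdiv]
      constructor
      · rw [le_div_iff₀ hlspos, neg_mul, hmulg]; linarith
      · rw [div_le_iff₀ hlspos, hmulg]; linarith
    have : Filter.Tendsto (fun s => z s / Real.log s - 2) Filter.atTop (nhds 0) := by
      refine squeeze_zero_norm' ?_ hg
      simpa [Real.norm_eq_abs] using hev
    have h2 := this.add_const 2
    simpa using h2
end

section
/- Let e₀ > 0 and a : [s₀, S] → ℝ be C¹ with a(S) = 0 and |a'(s) - e₀ a(s)| ≤ K s^{-2} for all s ∈ [s₀, S], where K > 0. Then |a(s)| ≤ (K/e₀) s^{-2} for all s ∈ [s₀, S]. -/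
/-- Backward integration estimate for the unstable direction: if `a(S) = 0`
and `|a' - e₀ a| ≤ K s⁻²` on `[s₀, S]`, then `|a(s)| ≤ (K/e₀) s⁻²` there. -/
theorem stmt13 (e₀ K s₀ S : ℝ) (he₀ : 0 < e₀) (hK : 0 < K) (hs₀ : 0 < s₀)
    (hS : s₀ ≤ S) (a a' : ℝ → ℝ)
    (hderiv : ∀ s ∈ Set.Icc s₀ S, HasDerivAt a (a' s) s)
    (hcont : ContinuousOn a' (Set.Icc s₀ S))
    (hbound : ∀ s ∈ Set.Icc s₀ S, |a' s - e₀ * a s| ≤ K / s ^ 2)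
    (hfin : a S = 0) :
    ∀ s ∈ Set.Icc s₀ S, |a s| ≤ (K / e₀) / s ^ 2 := by
  intro s hs
  obtain ⟨hs₀s, hsS⟩ := hs
  have hspos : 0 < s := lt_of_lt_of_le hs₀ hs₀s
  set b : ℝ → ℝ := fun t => Real.exp (-e₀ * t) * a t with hbdef
  set b' : ℝ → ℝ := fun t => Real.exp (-e₀ * t) * (a' t - e₀ * a t) with hb'def
  have hderivb : ∀ t ∈ Set.Icc s₀ S, HasDerivAt b (b' t) t := by
    intro t ht
    have h1 : HasDerivAt (fun u => Real.exp (-e₀ * u)) (Real.exp (-e₀ * t) * (-e₀)) t := by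
      have h2 : HasDerivAt (fun u : ℝ => -e₀ * u) (-e₀) t := by
        simpa using (hasDerivAt_id t).const_mul (-e₀)
      exact (Real.hasDerivAt_exp (-e₀ * t)).comp t h2
    have := h1.mul (hderiv t ht)
    refine this.congr_deriv ?_
    show _ = Real.exp (-e₀ * t) * (a' t - e₀ * a t)
    ring
  have hsubset : Set.Icc s S ⊆ Set.Icc s₀ S := Set.Icc_subset_Icc hs₀s le_rfl
  have hconta : ContinuousOn a (Set.Icc s₀ S) := fun t ht =>
    (hderiv t ht).continuousAt.continuousWithinAt
  have hcontb' : ContinuousOn b' (Set.Icc s S) := by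
    apply ContinuousOn.mono _ hsubset
    exact ((Real.continuous_exp.comp (continuous_const.mul continuous_id)).continuousOn).mul
      (hcont.sub (continuousOn_const.mul hconta))
  have hint : IntervalIntegrable b' MeasureTheory.volume s S :=
    hcontb'.intervalIntegrable_of_Icc hsS
  have hftc : ∫ t in s..S, b' t = b S - b s :=
    intervalIntegral.integral_eq_sub_of_hasDerivAt
      (fun t ht => hderivb t (hsubset (by rwa [Set.uIcc_of_le hsS] at ht))) hint
  have hbS : b S = 0 := by simp [hbdef, hfin]
  -- bounding function
  set g : ℝ → ℝ := fun t => K / s ^ 2 * Real.exp (-e₀ * t) with hgdef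
  have hgle : ∀ t ∈ Set.Icc s S, |b' t| ≤ g t := by
    intro t ht
    have ht' := hsubset ht
    have h1 : |b' t| = Real.exp (-e₀ * t) * |a' t - e₀ * a t| := by
      rw [hb'def, abs_mul, abs_of_pos (Real.exp_pos _)]
    rw [h1, hgdef]
    have h2 : |a' t - e₀ * a t| ≤ K / t ^ 2 := hbound t ht'
    have h3 : K / t ^ 2 ≤ K / s ^ 2 := by
      apply div_le_div_of_nonneg_left hK.le (by positivity)
      exact pow_le_pow_left₀ hspos.le ht.1 2
    calc Real.exp (-e₀ * t) * |a' t - e₀ * a t|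
        ≤ Real.exp (-e₀ * t) * (K / s ^ 2) := by
          exact mul_le_mul_of_nonneg_left (h2.trans h3) (Real.exp_pos _).le
      _ = K / s ^ 2 * Real.exp (-e₀ * t) := by ring
  have hcontg : ContinuousOn g (Set.Icc s S) :=
    (continuousOn_const.mul ((Real.continuous_exp.comp
      (continuous_const.mul continuous_id)).continuousOn))
  have hintg : IntervalIntegrable g MeasureTheory.volume s S :=
    hcontg.intervalIntegrable_of_Icc hsS
  have hintabs : IntervalIntegrable (fun t => |b' t|) MeasureTheory.volume s S :=
    hint.abs
  -- integral of g
  have hgftc : ∫ t in s..S, g t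
      = (-(K / s ^ 2 / e₀) * Real.exp (-e₀ * S)) - (-(K / s ^ 2 / e₀) * Real.exp (-e₀ * s)) := by
    apply intervalIntegral.integral_eq_sub_of_hasDerivAt _ hintg
    intro t ht
    have h2 : HasDerivAt (fun u : ℝ => -e₀ * u) (-e₀) t := by
      simpa using (hasDerivAt_id t).const_mul (-e₀)
    have h1 : HasDerivAt (fun u => Real.exp (-e₀ * u)) (Real.exp (-e₀ * t) * (-e₀)) t :=
      (Real.hasDerivAt_exp (-e₀ * t)).comp t h2
    have := h1.const_mul (-(K / s ^ 2 / e₀))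
    refine this.congr_deriv ?_
    show -(K / s ^ 2 / e₀) * (Real.exp (-e₀ * t) * (-e₀)) = K / s ^ 2 * Real.exp (-e₀ * t)
    field_simp
  have hbs : |b s| ≤ K / s ^ 2 / e₀ * Real.exp (-e₀ * s) := by
    have h0 : b s = -(∫ t in s..S, b' t) := by rw [hftc, hbS]; ring
    have h1 : |b s| ≤ ∫ t in s..S, |b' t| := by
      rw [h0, abs_neg]
      exact (intervalIntegral.abs_integral_le_integral_abs hsS).trans_eq rfl
    have h2 : (∫ t in s..S, |b' t|) ≤ ∫ t in s..S, g t := by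
      apply intervalIntegral.integral_mono_on hsS hintabs hintg
      exact hgle
    have h3 : (∫ t in s..S, g t) ≤ K / s ^ 2 / e₀ * Real.exp (-e₀ * s) := by
      rw [hgftc]
      have : 0 ≤ K / s ^ 2 / e₀ * Real.exp (-e₀ * S) := by positivity
      nlinarith
    linarith
  have hbseq : b s = Real.exp (-e₀ * s) * a s := rfl
  have hexp : Real.exp (-e₀ * s) > 0 := Real.exp_pos _
  have : Real.exp (-e₀ * s) * |a s| ≤ K / s ^ 2 / e₀ * Real.exp (-e₀ * s) := by
    calc Real.exp (-e₀ * s) * |a s| = |b s| := by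
          rw [hbseq, abs_mul, abs_of_pos hexp]
      _ ≤ _ := hbs
  have h4 : |a s| ≤ K / s ^ 2 / e₀ := by
    have := (mul_le_mul_iff_of_pos_right hexp).mp (by linarith [this] : |a s| * Real.exp (-e₀ * s) ≤ K / s ^ 2 / e₀ * Real.exp (-e₀ * s))
    linarith
  calc |a s| ≤ K / s ^ 2 / e₀ := h4
    _ = (K / e₀) / s ^ 2 := by ring
end

section
/- Let ζ : [s₀, S] → ℝ be C¹ with |ζ'(s) - 1| ≤ C (log s)^{-1}, and set ξ(s) = (ζ(s) - s)² s^{-2} log s. If at a point s* ∈ [s₀, S] one has |ζ(s*) - s*| = s* (log s*)^{-1/2}, then ξ'(s*) = -2/s* + O(s*^{-1}(log s*)^{-1/2}); in particular for s₀ large enough, ξ'(s*) < -1/s*. -/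
set_option maxHeartbeats 1000000 in
/-- Transversality at the exit time: if `|ζ' - 1| ≤ C/log s` and
`|ζ(s*) - s*| = s* (log s*)^{-1/2}`, then with
`ξ(s) = (ζ(s)-s)² s⁻² log s` one has `ξ'(s*) = -2/s* + O(s*⁻¹(log s*)^{-1/2})`,
and in particular `ξ'(s*) < -1/s*` for `s₀` large. -/
theorem stmt14 (C : ℝ) (hC : 0 < C) :
    ∃ C' : ℝ, 0 < C' ∧ ∃ s₁ : ℝ, ∀ s₀ S : ℝ, s₁ ≤ s₀ → s₀ ≤ S →
      ∀ ζ : ℝ → ℝ, (∀ s ∈ Set.Icc s₀ S, DifferentiableAt ℝ ζ s) →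
        (∀ s ∈ Set.Icc s₀ S, |deriv ζ s - 1| ≤ C / Real.log s) →
        ∀ s' ∈ Set.Icc s₀ S,
          |ζ s' - s'| = s' * (Real.log s') ^ (-(1:ℝ) / 2) →
          |deriv (fun s => (ζ s - s) ^ 2 * s ^ (-(2:ℝ)) * Real.log s) s'
              + 2 / s'| ≤ C' * s'⁻¹ * (Real.log s') ^ (-(1:ℝ) / 2) ∧
          deriv (fun s => (ζ s - s) ^ 2 * s ^ (-(2:ℝ)) * Real.log s) s'
            < -(1 / s') := by
  refine ⟨2 * C + 1, by linarith, Real.exp ((2 * C + 1) ^ 2 + 1), ?_⟩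
  intro s₀ S hs₁ hS ζ hdiff hbound s' hs' hexit
  obtain ⟨h1, h2⟩ := hs'
  have hsgt : Real.exp ((2 * C + 1) ^ 2 + 1) ≤ s' := le_trans hs₁ h1
  have hspos : 0 < s' := lt_of_lt_of_le (Real.exp_pos _) hsgt
  have hL : (2 * C + 1) ^ 2 + 1 ≤ Real.log s' := by
    calc (2 * C + 1) ^ 2 + 1 = Real.log (Real.exp ((2 * C + 1) ^ 2 + 1)) := (Real.log_exp _).symm
    _ ≤ Real.log s' := Real.log_le_log (Real.exp_pos _) hsgt
  set L := Real.log s' with hLdef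
  have hLpos : 0 < L := by nlinarith [sq_nonneg (2 * C + 1)]
  have hL1 : 1 ≤ L := by nlinarith [sq_nonneg (2 * C + 1)]
  set X := L ^ (-(1:ℝ) / 2) with hXdef
  have hXpos : 0 < X := Real.rpow_pos_of_pos hLpos _
  have hsq : X ^ 2 = L⁻¹ := by
    rw [hXdef, ← Real.rpow_natCast (L ^ (-(1:ℝ)/2)) 2, ← Real.rpow_mul hLpos.le]
    norm_num [Real.rpow_neg_one]
  -- derivative computation
  have hζ : HasDerivAt ζ (deriv ζ s') s' := (hdiff s' ⟨h1, h2⟩).hasDerivAt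
  have hu : HasDerivAt (fun s => ζ s - s) (deriv ζ s' - 1) s' := hζ.sub (hasDerivAt_id s')
  have hu2 : HasDerivAt (fun s => (ζ s - s) ^ 2) (2 * (ζ s' - s') * (deriv ζ s' - 1)) s' := by
    have := hu.fun_pow 2
    simpa [mul_comm, mul_assoc, mul_left_comm] using this
  have hr : HasDerivAt (fun s : ℝ => s ^ (-(2:ℝ))) (-(2:ℝ) * s' ^ (-(2:ℝ) - 1)) s' :=
    Real.hasDerivAt_rpow_const (Or.inl hspos.ne')
  have hlog : HasDerivAt Real.log s'⁻¹ s' := Real.hasDerivAt_log hspos.ne'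
  have hfull := ((hu2.mul hr).mul hlog)
  have hD : deriv (fun s => (ζ s - s) ^ 2 * s ^ (-(2:ℝ)) * Real.log s) s'
      = (2 * (ζ s' - s') * (deriv ζ s' - 1) * s' ^ (-(2:ℝ))
          + (ζ s' - s') ^ 2 * (-(2:ℝ) * s' ^ (-(2:ℝ) - 1))) * L
        + (ζ s' - s') ^ 2 * s' ^ (-(2:ℝ)) * s'⁻¹ := hfull.deriv
  have e2 : s' ^ (-(2:ℝ)) = (s' ^ 2)⁻¹ := by
    rw [Real.rpow_neg hspos.le, show (2:ℝ) = ((2:ℕ):ℝ) by norm_num, Real.rpow_natCast]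
  have e3 : s' ^ (-(2:ℝ) - 1) = (s' ^ 3)⁻¹ := by
    rw [show (-(2:ℝ) - 1) = -(3:ℝ) by norm_num, Real.rpow_neg hspos.le,
      show (3:ℝ) = ((3:ℕ):ℝ) by norm_num, Real.rpow_natCast]
  have husq : (ζ s' - s') ^ 2 = s' ^ 2 * L⁻¹ := by
    rw [← sq_abs, hexit, mul_pow, hsq]
  have hd : |deriv ζ s' - 1| ≤ C / L := hbound s' ⟨h1, h2⟩
  set u := ζ s' - s' with hu_def
  set d := deriv ζ s' - 1 with hd_def
  -- simplify D + 2/s'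
  have hEq : deriv (fun s => (ζ s - s) ^ 2 * s ^ (-(2:ℝ)) * Real.log s) s' + 2 / s'
      = 2 * u * d * (s' ^ 2)⁻¹ * L + s'⁻¹ * L⁻¹ := by
    rw [hD, e2, e3, husq]
    field_simp
    ring
  have hterm1 : |2 * u * d * (s' ^ 2)⁻¹ * L| ≤ 2 * C * s'⁻¹ * X := by
    have h0 : |2 * u * d * (s' ^ 2)⁻¹ * L| = 2 * |u| * |d| * (s' ^ 2)⁻¹ * L := by
      rw [abs_mul, abs_mul, abs_mul, abs_mul, abs_two, abs_of_pos hLpos,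
        abs_of_pos (by positivity : (0:ℝ) < (s' ^ 2)⁻¹)]
    rw [h0, hexit]
    have : 2 * (s' * X) * |d| * (s' ^ 2)⁻¹ * L ≤ 2 * (s' * X) * (C / L) * (s' ^ 2)⁻¹ * L := by
      have hb : 0 ≤ 2 * (s' * X) * (s' ^ 2)⁻¹ * L := by positivity
      nlinarith [abs_nonneg d, mul_pos hspos hXpos]
    refine le_trans this (le_of_eq ?_)
    field_simp
  have hterm2 : s'⁻¹ * L⁻¹ ≤ 1 * s'⁻¹ * X := by
    have : L⁻¹ ≤ X := by
      rw [hXdef, ← Real.rpow_neg_one L]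
      exact Real.rpow_le_rpow_of_exponent_le hL1 (by norm_num)
    have hs'inv : (0:ℝ) ≤ s'⁻¹ := by positivity
    nlinarith
  have hmain : |deriv (fun s => (ζ s - s) ^ 2 * s ^ (-(2:ℝ)) * Real.log s) s' + 2 / s'|
      ≤ (2 * C + 1) * s'⁻¹ * X := by
    rw [hEq]
    calc |2 * u * d * (s' ^ 2)⁻¹ * L + s'⁻¹ * L⁻¹|
        ≤ |2 * u * d * (s' ^ 2)⁻¹ * L| + |s'⁻¹ * L⁻¹| := abs_add_le _ _
      _ ≤ 2 * C * s'⁻¹ * X + 1 * s'⁻¹ * X := by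
          refine add_le_add hterm1 ?_
          rwa [abs_of_pos (by positivity : (0:ℝ) < s'⁻¹ * L⁻¹)]
      _ = (2 * C + 1) * s'⁻¹ * X := by ring
  refine ⟨hmain, ?_⟩
  -- second claim
  have hCX : (2 * C + 1) * X < 1 := by
    have h1 : ((2 * C + 1) * X) ^ 2 < 1 := by
      have : (2 * C + 1) ^ 2 < L := by linarith
      have hXsq : X ^ 2 = L⁻¹ := hsq
      have hLinv : L⁻¹ * (2 * C + 1) ^ 2 < 1 := by
        rw [inv_mul_lt_iff₀ hLpos]
        linarith
      calc ((2 * C + 1) * X) ^ 2 = L⁻¹ * (2 * C + 1) ^ 2 := by rw [mul_pow, hXsq]; ring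
        _ < 1 := hLinv
    nlinarith [mul_pos (by linarith : (0:ℝ) < 2 * C + 1) hXpos]
  have habs := (abs_le.mp hmain).2
  have hsinv : (0:ℝ) < s'⁻¹ := by positivity
  have : (2 * C + 1) * s'⁻¹ * X < s'⁻¹ := by
    calc (2 * C + 1) * s'⁻¹ * X = s'⁻¹ * ((2 * C + 1) * X) := by ring
      _ < s'⁻¹ * 1 := by exact (mul_lt_mul_iff_right₀ hsinv).mpr hCX
      _ = s'⁻¹ := mul_one _
  have h2s : 2 / s' = s'⁻¹ + s'⁻¹ := by rw [div_eq_mul_inv]; ring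
  have h1s : 1 / s' = s'⁻¹ := one_div s'
  linarith
end
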